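/- arXiv:2205.00918 — 2 statements merged into one kernel-verified Lean document; each statement's English description precedes it below -/
import Mathlib

section
/- Aliasing identity for bivariate Gauss–Chebyshev quadrature: if f has absolutely convergent bivariate Chebyshev series with coefficients c_{i,j}, and c̃_{i,j} denotes the discrete coefficient computed from the n_x × n_y tensor grid of Chebyshev roots, then c̃_{i,j} = c_{i,j} + ∑_{k_x≥1} (−1)^{k_x}(c_{2k_x n_x − i, j} + c_{2k_x n_x + i, j}) + ∑_{k_y≥1} (−1)^{k_y}(c_{i, 2k_y n_y − j} + c_{i, 2k_y n_y + j}) + ∑_{k_x≥1} ∑_{k_y≥1} (−1)^{k_x+k_y}(c_{2k_x n_x − i, 2k_y n_y − j} + c_{2k_x n_x − i, 2k_y n_y + j} + c_{2k_x n_x + i, 2k_y n_y − j} + c_{2k_x n_x + i, 2k_y n_y + j}). -/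
/-!
At the roots `x_l = cos θ_l` of `T_n` one has
`T_a(x_l) T_i(x_l) = (cos((a + i) θ_l) + cos((a - i) θ_l)) / 2`, and `∑_l cos(m θ_l)`
vanishes unless `2n ∣ m`, where it equals `n (-1)^(m / 2n)` (a telescoping sine sum).
Hence, for `i ≤ n`, the weight `K(a)` with which `c_a` enters the discrete coefficient of
degree `i` is `[a = i]` plus `(-1)^k` for each way of writing `a = 2kn ± i` with `k ≥ 1`: this
is the univariate aliasing identity. The tensor-grid quadrature factorises, so by absolute
convergence `c̃_{i,j} = ∑_{a,b} K_x(a) K_y(b) c_{a,b}`; applying the univariate identity in `b`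
and then in `a` produces the four groups of terms.
-/

open Real Finset

/-- Chebyshev polynomial `T_n` on `[-1,1]`. -/
noncomputable def T (n : ℕ) (x : ℝ) : ℝ := Real.cos (n * Real.arccos x)

/-- Halving weight for the primed sums. -/
noncomputable def w (n : ℕ) : ℝ := if n = 0 then 1 / 2 else 1

/-- The `l`-th root of the Chebyshev polynomial `T_n` (for `1 ≤ l ≤ n`). -/
noncomputable def chebNode (n l : ℕ) : ℝ := Real.cos ((2 * (l : ℝ) - 1) * π / (2 * n))

/-- Discrete (quadrature) bivariate Chebyshev coefficient on an `n_x × n_y` grid. -/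
noncomputable def ctilde (f : ℝ → ℝ → ℝ) (nx ny i j : ℕ) : ℝ :=
  (4 / ((nx : ℝ) * ny)) * ∑ lx ∈ Finset.Icc 1 nx, ∑ ly ∈ Finset.Icc 1 ny,
    f (chebNode nx lx) (chebNode ny ly) * T i (chebNode nx lx) * T j (chebNode ny ly)

noncomputable def chebAngle (n l : ℕ) : ℝ := (2 * (l : ℝ) - 1) * π / (2 * n)

lemma chebAngle_mem_Icc {n l : ℕ} (hl : l ∈ Icc 1 n) : chebAngle n l ∈ Set.Icc 0 π := by
  obtain ⟨h1, h2⟩ := Finset.mem_Icc.1 hl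
  have h1' : (1 : ℝ) ≤ l := by exact_mod_cast h1
  have h2' : (l : ℝ) ≤ n := by exact_mod_cast h2
  constructor
  · exact div_nonneg (mul_nonneg (by linarith) pi_pos.le) (by positivity)
  · rw [chebAngle, div_le_iff₀ (by linarith)]
    nlinarith [pi_pos]

lemma T_chebNode {n l : ℕ} (a : ℕ) (hl : l ∈ Icc 1 n) :
    T a (chebNode n l) = cos (a * chebAngle n l) := by
  obtain ⟨h0, hπ⟩ := chebAngle_mem_Icc hl
  rw [T, chebNode, ← chebAngle, arccos_cos h0 hπ]

lemma chebNode_mem_Icc (n l : ℕ) : chebNode n l ∈ Set.Icc (-1) 1 :=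
  ⟨neg_one_le_cos _, cos_le_one _⟩

lemma abs_T_le (a : ℕ) (x : ℝ) : |T a x| ≤ 1 := abs_cos_le_one _

lemma abs_w_le (a : ℕ) : |w a| ≤ 1 := by
  unfold w; split_ifs <;> norm_num

lemma two_mul_sin_mul_sum_cos_odd_mul (α : ℝ) (N : ℕ) :
    2 * sin α * ∑ l ∈ Icc 1 N, cos ((2 * l - 1) * α) = sin (2 * N * α) := by
  induction N with
  | zero => simp
  | succ N ih =>
    rw [sum_Icc_succ_top (by omega), mul_add, ih]
    have h₁ : 2 * ((N + 1 : ℕ) : ℝ) * α = (2 * ((N + 1 : ℕ) : ℝ) - 1) * α + α := by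
      ring
    have h₂ : 2 * (N : ℝ) * α = (2 * ((N + 1 : ℕ) : ℝ) - 1) * α - α := by push_cast; ring
    rw [h₁, h₂, sin_add, sin_sub]
    ring

noncomputable def aliasSign (n m : ℕ) : ℝ := if 2 * n ∣ m then (-1) ^ (m / (2 * n)) else 0

lemma sum_cos_mul_chebAngle {n : ℕ} (hn : 0 < n) (m : ℕ) :
    ∑ l ∈ Icc 1 n, cos (m * chebAngle n l) = n * aliasSign n m := by
  have hn' : (n : ℝ) ≠ 0 := by positivity
  unfold aliasSign
  split_ifs with hdvd
  · obtain ⟨k, rfl⟩ := hdvd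
    have hterm : ∀ l ∈ Icc 1 n, cos (((2 * n * k : ℕ) : ℝ) * chebAngle n l) = (-1) ^ k := by
      intro l _
      have : ((2 * n * k : ℕ) : ℝ) * chebAngle n l = -(k * π) + (l * k : ℕ) * (2 * π) := by
        unfold chebAngle; push_cast; field_simp; ring
      rw [this, cos_add_nat_mul_two_pi, cos_neg, cos_nat_mul_pi]
    rw [sum_congr rfl hterm, sum_const, Nat.card_Icc, nsmul_eq_mul,
      Nat.mul_div_cancel_left _ (by omega)]
    simp
  · have hsin : sin (m * π / (2 * n)) ≠ 0 := by
      rw [Ne, sin_eq_zero_iff]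
      rintro ⟨z, hz⟩
      have hm : (m : ℝ) = 2 * n * z := by
        field_simp at hz; linarith
      exact hdvd (Int.natCast_dvd_natCast.mp ⟨z, by exact_mod_cast hm⟩)
    have htel := two_mul_sin_mul_sum_cos_odd_mul (m * π / (2 * n)) n
    rw [show 2 * (n : ℝ) * (m * π / (2 * n)) = m * π by field_simp, sin_nat_mul_pi] at htel
    have hterm : ∀ l ∈ Icc 1 n,
        cos (m * chebAngle n l) = cos ((2 * l - 1) * (m * π / (2 * n))) := by
      intro l _; congr 1; unfold chebAngle; ring
    rw [sum_congr rfl hterm, mul_zero]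
    simpa [hsin] using htel

lemma two_div_mul_sum_T_mul_T {n a b : ℕ} (hn : 0 < n) (hba : b ≤ a) :
    2 / n * ∑ l ∈ Icc 1 n, T a (chebNode n l) * T b (chebNode n l)
      = aliasSign n (a + b) + aliasSign n (a - b) := by
  have hterm : ∀ l ∈ Icc 1 n, T a (chebNode n l) * T b (chebNode n l)
      = (cos (((a + b : ℕ) : ℝ) * chebAngle n l)
          + cos (((a - b : ℕ) : ℝ) * chebAngle n l)) / 2 := by
    intro l hl
    rw [T_chebNode a hl, T_chebNode b hl, Nat.cast_sub hba, Nat.cast_add, add_mul, sub_mul,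
      cos_add, cos_sub]
    ring
  rw [sum_congr rfl hterm, ← sum_div, sum_add_distrib, sum_cos_mul_chebAngle hn,
    sum_cos_mul_chebAngle hn]
  field_simp

lemma aliasSign_zero (n : ℕ) : aliasSign n 0 = 1 := by simp [aliasSign]

lemma aliasSign_eq_zero {n m : ℕ} (hm₀ : 0 < m) (hm : m < 2 * n) : aliasSign n m = 0 :=
  if_neg fun h => hm₀.ne' (Nat.eq_zero_of_dvd_of_lt h hm)

lemma aliasSign_two_mul_mul {n : ℕ} (hn : 0 < n) (k : ℕ) :
    aliasSign n (2 * k * n) = (-1) ^ k := by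
  rw [aliasSign, if_pos ⟨k, by ring⟩, show 2 * k * n = 2 * n * k by ring,
    Nat.mul_div_cancel_left _ (by omega)]

lemma exists_eq_of_aliasSign_ne_zero {n m : ℕ} (h : aliasSign n m ≠ 0) (hm : m ≠ 0) :
    ∃ k, m = 2 * (k + 1) * n := by
  by_cases hdvd : 2 * n ∣ m
  · obtain ⟨k, rfl⟩ := hdvd
    obtain ⟨k, rfl⟩ := Nat.exists_eq_succ_of_ne_zero (right_ne_zero_of_mul hm)
    exact ⟨k, by rw [Nat.succ_eq_add_one]; ring⟩
  · exact absurd (if_neg hdvd) h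

/-- The weight with which the coefficient `c_a` of a univariate Chebyshev series enters its
discrete coefficient of degree `i` on `n` nodes. -/
noncomputable def aliasWeight (n i a : ℕ) : ℝ :=
  w a * (2 / n * ∑ l ∈ Icc 1 n, T a (chebNode n l) * T i (chebNode n l))

-- The aliasing contributions of the degrees `a = 2kn - i` and `a = 2kn + i` (`k ≥ 1`).
noncomputable def aliasLower (n i a : ℕ) : ℝ := if a + i ≠ 0 then aliasSign n (a + i) else 0

noncomputable def aliasUpper (n i a : ℕ) : ℝ := if i < a then aliasSign n (a - i) else 0

lemma aliasWeight_eq {n i : ℕ} (hn : 0 < n) (hi : i ≤ n) (a : ℕ) :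
    aliasWeight n i a = (if a = i then 1 else 0) + aliasLower n i a + aliasUpper n i a := by
  rw [aliasWeight, aliasLower, aliasUpper]
  rcases lt_trichotomy a i with hai | rfl | hia
  · have hsum : ∑ l ∈ Icc 1 n, T a (chebNode n l) * T i (chebNode n l)
        = ∑ l ∈ Icc 1 n, T i (chebNode n l) * T a (chebNode n l) :=
      sum_congr rfl fun _ _ => mul_comm _ _
    rw [hsum, two_div_mul_sum_T_mul_T hn hai.le, aliasSign_eq_zero (by omega) (by omega),
      aliasSign_eq_zero (by omega) (by omega), add_comm a i,
      aliasSign_eq_zero (by omega) (by omega)]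
    simp [hai.ne, hai.not_gt]
  · rw [two_div_mul_sum_T_mul_T hn le_rfl, Nat.sub_self, aliasSign_zero]
    rcases Nat.eq_zero_or_pos a with rfl | ha
    · norm_num [w, aliasSign_zero]
    · simp [w, ha.ne']
      ring
  · rw [two_div_mul_sum_T_mul_T hn hia.le]
    simp [w, hia.ne', (Nat.zero_le i).trans_lt hia |>.ne', hia]

lemma abs_aliasWeight_le (n i a : ℕ) : |aliasWeight n i a| ≤ 2 := by
  have hsum : |∑ l ∈ Icc 1 n, T a (chebNode n l) * T i (chebNode n l)| ≤ n := by
    refine (abs_sum_le_sum_abs _ _).trans ?_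
    calc ∑ l ∈ Icc 1 n, |T a (chebNode n l) * T i (chebNode n l)|
        ≤ ∑ _l ∈ Icc 1 n, (1 : ℝ) :=
          sum_le_sum fun l _ => by
            rw [abs_mul]; exact mul_le_one₀ (abs_T_le _ _) (abs_nonneg _) (abs_T_le _ _)
      _ = n := by simp
  rw [aliasWeight, abs_mul, abs_mul, abs_of_nonneg (by positivity : (0 : ℝ) ≤ 2 / n)]
  calc |w a| * (2 / n * |∑ l ∈ Icc 1 n, T a (chebNode n l) * T i (chebNode n l)|)
      ≤ 1 * (2 / n * n) := by gcongr; exact abs_w_le a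
    _ ≤ 2 := by
      rcases Nat.eq_zero_or_pos n with rfl | hn
      · simp
      · rw [div_mul_cancel₀ _ (by positivity)]; simp

lemma strictMono_two_mul_succ_mul_sub {n i : ℕ} (hn : 0 < n) (hi : i ≤ n) :
    StrictMono fun k => 2 * (k + 1) * n - i := by
  intro k l hkl
  have h₁ : 2 * (k + 1) * n + 2 * n ≤ 2 * (l + 1) * n := by nlinarith
  have h₂ : n ≤ 2 * (k + 1) * n := by nlinarith
  simp only
  omega

lemma strictMono_two_mul_succ_mul_add {n : ℕ} (hn : 0 < n) (i : ℕ) :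
    StrictMono fun k => 2 * (k + 1) * n + i := by
  intro k l hkl
  have : 2 * (k + 1) * n < 2 * (l + 1) * n := by nlinarith
  simpa using this

lemma aliasLower_two_mul_succ_mul_sub {n i : ℕ} (hn : 0 < n) (hi : i ≤ n) (k : ℕ) :
    aliasLower n i (2 * (k + 1) * n - i) = (-1) ^ (k + 1) := by
  have h : 2 * (k + 1) * n - i + i = 2 * (k + 1) * n := Nat.sub_add_cancel (by nlinarith)
  rw [aliasLower, h, if_pos (by positivity), aliasSign_two_mul_mul hn]

lemma aliasUpper_two_mul_succ_mul_add {n : ℕ} (hn : 0 < n) (i k : ℕ) :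
    aliasUpper n i (2 * (k + 1) * n + i) = (-1) ^ (k + 1) := by
  rw [aliasUpper, if_pos (by nlinarith), Nat.add_sub_cancel, aliasSign_two_mul_mul hn]

lemma mem_range_of_aliasLower_ne_zero {n i a : ℕ} (h : aliasLower n i a ≠ 0) :
    a ∈ Set.range fun k => 2 * (k + 1) * n - i := by
  obtain ⟨hai, h⟩ := ite_ne_right_iff.1 h
  obtain ⟨k, hk⟩ := exists_eq_of_aliasSign_ne_zero h hai
  exact ⟨k, by simp only [← hk, Nat.add_sub_cancel]⟩

lemma mem_range_of_aliasUpper_ne_zero {n i a : ℕ} (h : aliasUpper n i a ≠ 0) :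
    a ∈ Set.range fun k => 2 * (k + 1) * n + i := by
  obtain ⟨hia, h⟩ := ite_ne_right_iff.1 h
  obtain ⟨k, hk⟩ := exists_eq_of_aliasSign_ne_zero h (by omega)
  exact ⟨k, by simp only; omega⟩

lemma summable_neg_one_pow_mul_comp {g : ℕ → ℝ} (hg : Summable g) {φ : ℕ → ℕ}
    (hφ : Function.Injective φ) : Summable fun k => (-1 : ℝ) ^ (k + 1) * g (φ k) :=
  .of_norm_bounded (hg.abs.comp_injective hφ) fun k => by simp

noncomputable def aliasSum (n i : ℕ) (g : ℕ → ℝ) : ℝ :=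
  ∑' k : ℕ, (-1 : ℝ) ^ (k + 1) * (g (2 * (k + 1) * n - i) + g (2 * (k + 1) * n + i))

lemma hasSum_aliasWeight_mul {n i : ℕ} (hn : 0 < n) (hi : i ≤ n) {g : ℕ → ℝ}
    (hg : Summable g) :
    HasSum (fun a => aliasWeight n i a * g a) (g i + aliasSum n i g) := by
  have hφ₁ := (strictMono_two_mul_succ_mul_sub hn hi).injective
  have hφ₂ := (strictMono_two_mul_succ_mul_add hn i).injective
  have hs₁ := summable_neg_one_pow_mul_comp hg hφ₁
  have hs₂ := summable_neg_one_pow_mul_comp hg hφ₂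
  have hlower : HasSum (fun a => aliasLower n i a * g a)
      (∑' k, (-1) ^ (k + 1) * g (2 * (k + 1) * n - i)) := by
    refine (hφ₁.hasSum_iff fun a ha => ?_).1 ?_
    · by_contra h; exact ha (mem_range_of_aliasLower_ne_zero (left_ne_zero_of_mul h))
    · simpa [Function.comp_def, aliasLower_two_mul_succ_mul_sub hn hi] using hs₁.hasSum
  have hupper : HasSum (fun a => aliasUpper n i a * g a)
      (∑' k, (-1) ^ (k + 1) * g (2 * (k + 1) * n + i)) := by
    refine (hφ₂.hasSum_iff fun a ha => ?_).1 ?_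
    · by_contra h; exact ha (mem_range_of_aliasUpper_ne_zero (left_ne_zero_of_mul h))
    · simpa [Function.comp_def, aliasUpper_two_mul_succ_mul_add hn] using hs₂.hasSum
  convert (hasSum_ite_eq i (g i)).add (hlower.add hupper) using 1
  · funext a
    rw [aliasWeight_eq hn hi]
    split_ifs with h <;> simp [h] <;> ring
  · rw [aliasSum, ← hs₁.tsum_add hs₂]
    simp only [mul_add]

lemma summable_aliasSum_terms {n i : ℕ} (hn : 0 < n) (hi : i ≤ n) {g : ℕ → ℝ}
    (hg : Summable g) :
    Summable fun k =>
      (-1 : ℝ) ^ (k + 1) * (g (2 * (k + 1) * n - i) + g (2 * (k + 1) * n + i)) := by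
  simpa only [mul_add] using
    (summable_neg_one_pow_mul_comp hg (strictMono_two_mul_succ_mul_sub hn hi).injective).add
      (summable_neg_one_pow_mul_comp hg (strictMono_two_mul_succ_mul_add hn i).injective)

lemma aliasSum_add {n i : ℕ} (hn : 0 < n) (hi : i ≤ n) {g h : ℕ → ℝ} (hg : Summable g)
    (hh : Summable h) : aliasSum n i (fun a => g a + h a) = aliasSum n i g + aliasSum n i h := by
  rw [aliasSum, aliasSum, aliasSum,
    ← (summable_aliasSum_terms hn hi hg).tsum_add (summable_aliasSum_terms hn hi hh)]
  exact tsum_congr fun k => by ring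

lemma aliasSum_aliasSum {nx ny i j : ℕ} (hny : 0 < ny) (hj : j ≤ ny)
    {c : ℕ → ℕ → ℝ} (hc : ∀ a, Summable (c a)) :
    aliasSum nx i (fun a => aliasSum ny j (c a))
      = ∑' kx : ℕ, ∑' ky : ℕ, (-1 : ℝ) ^ ((kx + 1) + (ky + 1)) *
          (c (2 * (kx + 1) * nx - i) (2 * (ky + 1) * ny - j)
            + c (2 * (kx + 1) * nx - i) (2 * (ky + 1) * ny + j)
            + c (2 * (kx + 1) * nx + i) (2 * (ky + 1) * ny - j)
            + c (2 * (kx + 1) * nx + i) (2 * (ky + 1) * ny + j)) := by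
  refine tsum_congr fun kx => ?_
  rw [← aliasSum_add hny hj (hc _) (hc _), aliasSum, ← tsum_mul_left]
  exact tsum_congr fun ky => by ring

lemma hasSum_chebyshev_series {c : ℕ → ℕ → ℝ}
    (hc : Summable fun p : ℕ × ℕ => |c p.1 p.2|) (x y : ℝ) :
    HasSum (fun p : ℕ × ℕ => w p.1 * w p.2 * c p.1 p.2 * T p.1 x * T p.2 y)
      (∑' a : ℕ, ∑' b : ℕ, w a * w b * c a b * T a x * T b y) := by
  have hs : Summable fun p : ℕ × ℕ => w p.1 * w p.2 * c p.1 p.2 * T p.1 x * T p.2 y := by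
    refine .of_norm_bounded hc fun p => ?_
    simp only [Real.norm_eq_abs, abs_mul]
    have := abs_w_le p.1; have := abs_w_le p.2; have := abs_T_le p.1 x; have := abs_T_le p.2 y
    calc |w p.1| * |w p.2| * |c p.1 p.2| * |T p.1 x| * |T p.2 y|
        ≤ 1 * 1 * |c p.1 p.2| * 1 * 1 := by gcongr
      _ = |c p.1 p.2| := by ring
  simpa only [hs.tsum_prod' hs.prod_factor] using hs.hasSum

lemma hasSum_ctilde {f : ℝ → ℝ → ℝ} {c : ℕ → ℕ → ℝ}
    (hc : Summable fun p : ℕ × ℕ => |c p.1 p.2|)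
    (hf : ∀ x ∈ Set.Icc (-1:ℝ) 1, ∀ y ∈ Set.Icc (-1:ℝ) 1,
      f x y = ∑' i : ℕ, ∑' j : ℕ, w i * w j * c i j * T i x * T j y) (nx ny i j : ℕ) :
    HasSum (fun p : ℕ × ℕ => aliasWeight nx i p.1 * aliasWeight ny j p.2 * c p.1 p.2)
      (ctilde f nx ny i j) := by
  have hnode : ∀ lx ly, HasSum (fun p : ℕ × ℕ => w p.1 * w p.2 * c p.1 p.2
        * T p.1 (chebNode nx lx) * T p.2 (chebNode ny ly)
        * T i (chebNode nx lx) * T j (chebNode ny ly))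
      (f (chebNode nx lx) (chebNode ny ly) * T i (chebNode nx lx) * T j (chebNode ny ly)) := by
    intro lx ly
    rw [hf _ (chebNode_mem_Icc nx lx) _ (chebNode_mem_Icc ny ly)]
    exact ((hasSum_chebyshev_series hc _ _).mul_right _).mul_right _
  refine ((hasSum_sum fun lx _ => hasSum_sum fun ly _ => hnode lx ly).mul_left
    (4 / ((nx : ℝ) * ny))).congr_fun fun p => ?_
  simp only [aliasWeight, mul_sum, sum_mul]
  rw [sum_comm]
  refine sum_congr rfl fun lx _ => sum_congr rfl fun ly _ => ?_
  ring

theorem bivariate_aliasing_identity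
    (f : ℝ → ℝ → ℝ) (c : ℕ → ℕ → ℝ)
    (hsum : Summable fun p : ℕ × ℕ => |c p.1 p.2|)
    (hf : ∀ x ∈ Set.Icc (-1:ℝ) 1, ∀ y ∈ Set.Icc (-1:ℝ) 1,
      f x y = ∑' i : ℕ, ∑' j : ℕ, w i * w j * c i j * T i x * T j y)
    (nx ny : ℕ) (hnx : 1 ≤ nx) (hny : 1 ≤ ny)
    (i j : ℕ) (hi : i ≤ nx) (hj : j ≤ ny) :
    ctilde f nx ny i j
      = c i j
        + (∑' kx : ℕ, (-1 : ℝ) ^ (kx + 1) *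
            (c (2 * (kx + 1) * nx - i) j + c (2 * (kx + 1) * nx + i) j))
        + (∑' ky : ℕ, (-1 : ℝ) ^ (ky + 1) *
            (c i (2 * (ky + 1) * ny - j) + c i (2 * (ky + 1) * ny + j)))
        + (∑' kx : ℕ, ∑' ky : ℕ, (-1 : ℝ) ^ ((kx + 1) + (ky + 1)) *
            (c (2 * (kx + 1) * nx - i) (2 * (ky + 1) * ny - j)
              + c (2 * (kx + 1) * nx - i) (2 * (ky + 1) * ny + j)
              + c (2 * (kx + 1) * nx + i) (2 * (ky + 1) * ny - j)
              + c (2 * (kx + 1) * nx + i) (2 * (ky + 1) * ny + j))) := by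
  have hc : Summable fun p : ℕ × ℕ => c p.1 p.2 := summable_abs_iff.1 hsum
  have hrow : ∀ a, Summable (c a) := fun a => hc.prod_factor a
  have hcol : Summable fun a => c a j :=
    hc.comp_injective (i := fun a => (a, j)) fun _ _ h => (Prod.ext_iff.1 h).1
  have hy : ∀ a, HasSum (fun b => aliasWeight ny j b * c a b) (c a j + aliasSum ny j (c a)) :=
    fun a => hasSum_aliasWeight_mul hny hj (hrow a)
  have hy_summable : Summable fun a => c a j + aliasSum ny j (c a) := by
    have : Summable fun p : ℕ × ℕ => aliasWeight ny j p.2 * c p.1 p.2 :=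
      .of_norm_bounded (hsum.mul_left 2) fun p => by
        rw [Real.norm_eq_abs, abs_mul]; gcongr; exact abs_aliasWeight_le ny j p.2
    exact this.prod.congr fun a => (hy a).tsum_eq
  have hy_alias_summable : Summable fun a => aliasSum ny j (c a) := (hy_summable.sub hcol).congr fun a => by ring
  have hx : HasSum (fun a => aliasWeight nx i a * (c a j + aliasSum ny j (c a)))
      (ctilde f nx ny i j) :=
    (hasSum_ctilde hsum hf nx ny i j).prod_fiberwise fun a => by
      simpa only [mul_assoc] using (hy a).mul_left (aliasWeight nx i a)
  rw [hx.unique (hasSum_aliasWeight_mul hnx hi hy_summable), aliasSum_add hnx hi hcol hy_alias_summable,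
    aliasSum_aliasSum hny hj hrow]
  unfold aliasSum
  ring
end

section
/- Given a doubly-indexed absolutely summable family (c_{i,j}), integers d_x = n_x − l_x with 1 ≤ l_x ≤ n_x − k, and d_y = n_y − l_y with 1 ≤ l_y ≤ n_y − l, the aliasing error satisfies ∑'_{i=0}^{d_x} ∑'_{j=0}^{d_y} |c_{i,j} − c̃_{i,j}| ≤ 2 ∑_{i>d_x} ∑_{j>d_y} |c_{i,j}| + ∑'_{j=0}^{d_y} ∑_{i>d_x} |c_{i,j}| + ∑'_{i=0}^{d_x} ∑_{j>d_y} |c_{i,j}|, where c̃_{i,j} is defined from c_{i,j} via the bivariate aliasing identity. -/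
open Real Finset

/-- Aliased (discrete) coefficients built from an exact coefficient family via the
bivariate aliasing identity on an `n_x × n_y` Chebyshev grid. -/
noncomputable def aliased (c : ℕ → ℕ → ℝ) (nx ny i j : ℕ) : ℝ :=
  c i j
    + (∑' kx : ℕ, (-1 : ℝ) ^ (kx + 1) *
        (c (2 * (kx + 1) * nx - i) j + c (2 * (kx + 1) * nx + i) j))
    + (∑' ky : ℕ, (-1 : ℝ) ^ (ky + 1) *
        (c i (2 * (ky + 1) * ny - j) + c i (2 * (ky + 1) * ny + j)))
    + (∑' kx : ℕ, ∑' ky : ℕ, (-1 : ℝ) ^ ((kx + 1) + (ky + 1)) *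
        (c (2 * (kx + 1) * nx - i) (2 * (ky + 1) * ny - j)
          + c (2 * (kx + 1) * nx - i) (2 * (ky + 1) * ny + j)
          + c (2 * (kx + 1) * nx + i) (2 * (ky + 1) * ny - j)
          + c (2 * (kx + 1) * nx + i) (2 * (ky + 1) * ny + j)))

open Function

noncomputable def aliasMass (f : ℕ → ℝ) (n i : ℕ) : ℝ :=
  ∑' k : ℕ, (f (2 * (k + 1) * n - i) + f (2 * (k + 1) * n + i))

lemma w_nonneg (m : ℕ) : 0 ≤ w m := by
  unfold w; split <;> norm_num

section Univariate

variable {f : ℕ → ℝ} {n i d : ℕ}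

lemma injective_alias_sub (hi : i < n) : Injective fun k : ℕ => 2 * (k + 1) * n - i :=
  StrictMono.injective <| strictMono_nat_of_lt_succ fun k => by
    have : 2 * (k + 1 + 1) * n = 2 * (k + 1) * n + 2 * n := by ring
    omega

lemma injective_alias_add (hn : 0 < n) (i : ℕ) :
    Injective fun k : ℕ => 2 * (k + 1) * n + i :=
  StrictMono.injective <| strictMono_nat_of_lt_succ fun k => by
    have : 2 * (k + 1 + 1) * n = 2 * (k + 1) * n + 2 * n := by ring
    omega

lemma summable_alias_terms (hf : Summable f) (hi : i < n) :
    Summable fun k : ℕ => f (2 * (k + 1) * n - i) + f (2 * (k + 1) * n + i) :=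
  (hf.comp_injective (injective_alias_sub hi)).add
    (hf.comp_injective (injective_alias_add (i.zero_le.trans_lt hi) i))

lemma aliasMass_nonneg (hf0 : ∀ m, 0 ≤ f m) : 0 ≤ aliasMass f n i :=
  tsum_nonneg fun _ => add_nonneg (hf0 _) (hf0 _)

lemma aliasMass_le_two_mul_tsum (hf0 : ∀ m, 0 ≤ f m) (hf : Summable f) (hi : i < n) :
    aliasMass f n i ≤ 2 * ∑' m, f m := by
  have hn : 0 < n := i.zero_le.trans_lt hi
  rw [two_mul]
  refine ((hf.comp_injective (injective_alias_sub hi)).tsum_add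
    (hf.comp_injective (injective_alias_add hn i))).trans_le ?_
  exact add_le_add (tsum_comp_le_tsum_of_inj hf hf0 (injective_alias_sub hi))
    (tsum_comp_le_tsum_of_inj hf hf0 (injective_alias_add hn i))

lemma aliasMass_mono {g : ℕ → ℝ} (hfg : ∀ m, f m ≤ g m) (hf : Summable f) (hg : Summable g)
    (hi : i < n) : aliasMass f n i ≤ aliasMass g n i :=
  Summable.tsum_le_tsum (fun _ => add_le_add (hfg _) (hfg _))
    (summable_alias_terms hf hi) (summable_alias_terms hg hi)

lemma aliasMass_finset_sum {ι : Type*} {s : Finset ι} {a : ι → ℝ} {g : ι → ℕ → ℝ}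
    (hg : ∀ j ∈ s, Summable (g j)) (hi : i < n) :
    aliasMass (fun m => ∑ j ∈ s, a j * g j m) n i = ∑ j ∈ s, a j * aliasMass (g j) n i := by
  simp only [aliasMass, ← tsum_mul_left, ← sum_add_distrib, ← mul_add]
  exact Summable.tsum_finsetSum fun j hj => (summable_alias_terms (hg j hj) hi).mul_left (a j)

lemma abs_tsum_alternating_le_aliasMass (hf : Summable fun m => |f m|) (hi : i < n) :
    |∑' k : ℕ, (-1 : ℝ) ^ (k + 1) * (f (2 * (k + 1) * n - i) + f (2 * (k + 1) * n + i))|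
      ≤ aliasMass (fun m => |f m|) n i := by
  rw [← Real.norm_eq_abs]
  refine tsum_of_norm_bounded (summable_alias_terms hf hi).hasSum fun k => ?_
  rw [Real.norm_eq_abs, abs_mul, abs_pow, abs_neg, abs_one, one_pow, one_mul]
  exact abs_add_le _ _

lemma sum_range_w_mul_add_eq_sum_Icc (f : ℕ → ℝ) {a d : ℕ} (hd : d ≤ a) :
    ∑ i ∈ range (d + 1), w i * (f (a - i) + f (a + i)) = ∑ m ∈ Icc (a - d) (a + d), f m := by
  induction d with
  | zero => simp [w, ← two_mul]
  | succ d ih =>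
    have hIcc : Icc (a - (d + 1)) (a + (d + 1))
        = insert (a - (d + 1)) (insert (a + (d + 1)) (Icc (a - d) (a + d))) := by
      ext m; simp only [mem_Icc, mem_insert]; omega
    rw [sum_range_succ, ih (by omega), show w (d + 1) = 1 from if_neg d.succ_ne_zero, one_mul,
      hIcc, sum_insert (by simp only [mem_insert, mem_Icc]; omega),
      sum_insert (by simp only [mem_Icc]; omega)]
    ring

lemma tsum_sum_le_tsum_add_of_pairwise_disjoint (hf0 : ∀ m, 0 ≤ f m) (hf : Summable f)
    {B : ℕ → Finset ℕ} (hB : Pairwise (Disjoint on B)) {a : ℕ} (ha : ∀ k, ∀ m ∈ B k, a ≤ m) :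
    ∑' k, ∑ m ∈ B k, f m ≤ ∑' m, f (m + a) := by
  classical
  refine Real.tsum_le_of_sum_range_le (fun k => sum_nonneg fun m _ => hf0 m) fun K => ?_
  rw [← sum_biUnion (hB.set_pairwise _)]
  have hdisj : Disjoint ((range K).biUnion B) (range a) := by
    refine disjoint_left.2 fun m hm => ?_
    obtain ⟨k, -, hk⟩ := mem_biUnion.1 hm
    simpa using ha k m hk
  have h := hf.sum_le_tsum ((range K).biUnion B ∪ range a) fun m _ => hf0 m
  rw [sum_union hdisj, ← hf.sum_add_tsum_nat_add a] at h
  linarith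

lemma pairwise_disjoint_alias_blocks (hd : d < n) :
    Pairwise (Disjoint on fun k : ℕ => Icc (2 * (k + 1) * n - d) (2 * (k + 1) * n + d)) := by
  have gap : ∀ k k', k < k' → 2 * (k + 1) * n + 2 * n ≤ 2 * (k' + 1) * n := fun k k' h => by
    nlinarith
  intro k k' hne
  refine disjoint_left.2 fun m hm hm' => ?_
  simp only [mem_Icc] at hm hm'
  rcases hne.lt_or_gt with h | h
  · have := gap k k' h; omega
  · have := gap k' k h; omega

theorem sum_range_w_mul_aliasMass_le (hf0 : ∀ m, 0 ≤ f m) (hf : Summable f) (hd : d < n) :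
    ∑ i ∈ range (d + 1), w i * aliasMass f n i ≤ ∑' m, f (d + 1 + m) := by
  have hn : ∀ k, 2 * n ≤ 2 * (k + 1) * n := fun k => by nlinarith
  calc ∑ i ∈ range (d + 1), w i * aliasMass f n i
      = ∑' k, ∑ i ∈ range (d + 1), w i * (f (2 * (k + 1) * n - i) + f (2 * (k + 1) * n + i)) := by
        simp only [aliasMass, ← tsum_mul_left]
        refine (Summable.tsum_finsetSum fun i hi => ?_).symm
        exact (summable_alias_terms hf (by rw [mem_range] at hi; omega)).mul_left _
    _ = ∑' k, ∑ m ∈ Icc (2 * (k + 1) * n - d) (2 * (k + 1) * n + d), f m :=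
        tsum_congr fun k => sum_range_w_mul_add_eq_sum_Icc f (by have := hn k; omega)
    _ ≤ ∑' m, f (m + (d + 1)) :=
        tsum_sum_le_tsum_add_of_pairwise_disjoint hf0 hf (pairwise_disjoint_alias_blocks hd)
          fun k m hm => by have := hn k; rw [mem_Icc] at hm; omega
    _ = ∑' m, f (d + 1 + m) := tsum_congr fun m => by rw [add_comm]

end Univariate

section Bivariate

variable {c : ℕ → ℕ → ℝ} {nx ny i j dx dy : ℕ}

lemma summable_aliasMass_abs_row (hsum : Summable fun p : ℕ × ℕ => |c p.1 p.2|) (hj : j < ny) :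
    Summable fun x => aliasMass (fun y => |c x y|) ny j :=
  Summable.of_nonneg_of_le (fun _ => aliasMass_nonneg fun _ => abs_nonneg _)
    (fun x => aliasMass_le_two_mul_tsum (fun _ => abs_nonneg _) (hsum.prod_factor x) hj)
    (hsum.prod.mul_left 2)

lemma abs_sub_aliased_le (hsum : Summable fun p : ℕ × ℕ => |c p.1 p.2|) (hi : i < nx)
    (hj : j < ny) :
    |c i j - aliased c nx ny i j|
      ≤ aliasMass (fun x => |c x j|) nx i + aliasMass (fun y => |c i y|) ny j
        + aliasMass (fun x => aliasMass (fun y => |c x y|) ny j) nx i := by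
  have hmixed : |∑' kx : ℕ, ∑' ky : ℕ, (-1 : ℝ) ^ ((kx + 1) + (ky + 1)) *
        (c (2 * (kx + 1) * nx - i) (2 * (ky + 1) * ny - j)
          + c (2 * (kx + 1) * nx - i) (2 * (ky + 1) * ny + j)
          + c (2 * (kx + 1) * nx + i) (2 * (ky + 1) * ny - j)
          + c (2 * (kx + 1) * nx + i) (2 * (ky + 1) * ny + j))|
      ≤ aliasMass (fun x => aliasMass (fun y => |c x y|) ny j) nx i := by
    rw [← Real.norm_eq_abs]
    refine tsum_of_norm_bounded
      (summable_alias_terms (summable_aliasMass_abs_row hsum hj) hi).hasSum fun kx => ?_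
    refine tsum_of_norm_bounded ((summable_alias_terms (hsum.prod_factor _) hj).hasSum.add
      (summable_alias_terms (hsum.prod_factor _) hj).hasSum) fun ky => ?_
    rw [Real.norm_eq_abs, abs_mul, abs_pow, abs_neg, abs_one, one_pow, one_mul]
    refine (abs_add_le _ _).trans ?_
    linarith [abs_add_three (c (2 * (kx + 1) * nx - i) (2 * (ky + 1) * ny - j))
      (c (2 * (kx + 1) * nx - i) (2 * (ky + 1) * ny + j))
      (c (2 * (kx + 1) * nx + i) (2 * (ky + 1) * ny - j))]
  rw [aliased, show ∀ a b x y : ℝ, a - (a + b + x + y) = -(b + x + y) by intros; ring, abs_neg]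
  refine (abs_add_three _ _ _).trans (add_le_add (add_le_add ?_ ?_) hmixed)
  · exact abs_tsum_alternating_le_aliasMass (hsum.prod_symm.prod_factor j) hi
  · exact abs_tsum_alternating_le_aliasMass (hsum.prod_factor i) hj

lemma sum_sum_w_mul_aliasMass_fst_le (hsum : Summable fun p : ℕ × ℕ => |c p.1 p.2|)
    (hdx : dx < nx) (dy : ℕ) :
    ∑ i ∈ range (dx + 1), ∑ j ∈ range (dy + 1), w i * w j * aliasMass (fun x => |c x j|) nx i
      ≤ ∑ j ∈ range (dy + 1), w j * ∑' m, |c (dx + 1 + m) j| := by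
  rw [sum_comm]
  refine sum_le_sum fun j _ => ?_
  calc ∑ i ∈ range (dx + 1), w i * w j * aliasMass (fun x => |c x j|) nx i
      = w j * ∑ i ∈ range (dx + 1), w i * aliasMass (fun x => |c x j|) nx i := by
        rw [mul_sum]; exact sum_congr rfl fun i _ => by ring
    _ ≤ w j * ∑' m, |c (dx + 1 + m) j| := mul_le_mul_of_nonneg_left
        (sum_range_w_mul_aliasMass_le (fun _ => abs_nonneg _) (hsum.prod_symm.prod_factor j) hdx)
        (w_nonneg j)

lemma sum_sum_w_mul_aliasMass_snd_le (hsum : Summable fun p : ℕ × ℕ => |c p.1 p.2|)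
    (dx : ℕ) (hdy : dy < ny) :
    ∑ i ∈ range (dx + 1), ∑ j ∈ range (dy + 1), w i * w j * aliasMass (fun y => |c i y|) ny j
      ≤ ∑ i ∈ range (dx + 1), w i * ∑' m, |c i (dy + 1 + m)| := by
  refine sum_le_sum fun i _ => ?_
  simp only [mul_assoc, ← mul_sum]
  exact mul_le_mul_of_nonneg_left
    (sum_range_w_mul_aliasMass_le (fun _ => abs_nonneg _) (hsum.prod_factor i) hdy) (w_nonneg i)

lemma sum_sum_w_mul_aliasMass_mixed_le (hsum : Summable fun p : ℕ × ℕ => |c p.1 p.2|)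
    (hdx : dx < nx) (hdy : dy < ny) :
    ∑ i ∈ range (dx + 1), ∑ j ∈ range (dy + 1),
        w i * w j * aliasMass (fun x => aliasMass (fun y => |c x y|) ny j) nx i
      ≤ ∑' m, ∑' m', |c (dx + 1 + m) (dy + 1 + m')| := by
  set tail : ℕ → ℝ := fun x => ∑' m', |c x (dy + 1 + m')|
  have htail : Summable tail :=
    Summable.of_nonneg_of_le (fun _ => tsum_nonneg fun _ => abs_nonneg _)
      (fun x => tsum_comp_le_tsum_of_inj (hsum.prod_factor x) (fun _ => abs_nonneg _)
        (add_right_injective (dy + 1)))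
      hsum.prod
  have hrows : ∀ j ∈ range (dy + 1), Summable fun x => aliasMass (fun y => |c x y|) ny j :=
    fun j hj => summable_aliasMass_abs_row hsum (by rw [mem_range] at hj; omega)
  calc ∑ i ∈ range (dx + 1), ∑ j ∈ range (dy + 1),
        w i * w j * aliasMass (fun x => aliasMass (fun y => |c x y|) ny j) nx i
      = ∑ i ∈ range (dx + 1), w i * aliasMass
          (fun x => ∑ j ∈ range (dy + 1), w j * aliasMass (fun y => |c x y|) ny j) nx i := by
        refine sum_congr rfl fun i hi => ?_
        rw [aliasMass_finset_sum hrows (by rw [mem_range] at hi; omega), mul_sum]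
        simp only [mul_assoc]
    _ ≤ ∑ i ∈ range (dx + 1), w i * aliasMass tail nx i := by
        refine sum_le_sum fun i hi => mul_le_mul_of_nonneg_left ?_ (w_nonneg i)
        exact aliasMass_mono
          (fun x => sum_range_w_mul_aliasMass_le (fun _ => abs_nonneg _) (hsum.prod_factor x) hdy)
          (summable_sum fun j hj => (hrows j hj).mul_left _) htail
          (by rw [mem_range] at hi; omega)
    _ ≤ ∑' m, tail (dx + 1 + m) :=
        sum_range_w_mul_aliasMass_le (fun _ => tsum_nonneg fun _ => abs_nonneg _) htail hdx

end Bivariate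

theorem aliasing_error_bound
    (c : ℕ → ℕ → ℝ) (hsum : Summable fun p : ℕ × ℕ => |c p.1 p.2|)
    (k l nx ny lx ly : ℕ)
    (hlx1 : 1 ≤ lx) (hlx2 : lx ≤ nx - k) (hly1 : 1 ≤ ly) (hly2 : ly ≤ ny - l)
    (dx dy : ℕ) (hdx : dx = nx - lx) (hdy : dy = ny - ly) :
    (∑ i ∈ Finset.range (dx + 1), ∑ j ∈ Finset.range (dy + 1),
        w i * w j * |c i j - aliased c nx ny i j|)
      ≤ 2 * (∑' i : ℕ, ∑' j : ℕ, |c (dx + 1 + i) (dy + 1 + j)|)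
        + (∑ j ∈ Finset.range (dy + 1), w j * ∑' i : ℕ, |c (dx + 1 + i) j|)
        + (∑ i ∈ Finset.range (dx + 1), w i * ∑' j : ℕ, |c i (dy + 1 + j)|) := by
  have hdx' : dx < nx := by omega
  have hdy' : dy < ny := by omega
  have hfst := sum_sum_w_mul_aliasMass_fst_le hsum hdx' dy
  have hsnd := sum_sum_w_mul_aliasMass_snd_le hsum dx hdy'
  have hmixed := sum_sum_w_mul_aliasMass_mixed_le hsum hdx' hdy'
  have htail : 0 ≤ ∑' i : ℕ, ∑' j : ℕ, |c (dx + 1 + i) (dy + 1 + j)| :=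
    tsum_nonneg fun _ => tsum_nonneg fun _ => abs_nonneg _
  refine (sum_le_sum fun i hi => sum_le_sum fun j hj => mul_le_mul_of_nonneg_left
    (abs_sub_aliased_le hsum (by rw [mem_range] at hi; omega) (by rw [mem_range] at hj; omega))
    (mul_nonneg (w_nonneg i) (w_nonneg j))).trans ?_
  simp only [mul_add, sum_add_distrib]
  linarith
end
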